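/- Let φ: R → R be defined by φ(y) = e^{-y} · log E[exp(e^y · X)] for a bounded real random variable X with E X = 0. Suppose φ'(y) ≤ C·e^y·B for all y ∈ R, where B > 0. Then for all L > 0, log E[exp(L·X)] ≤ C·L²·B. -/

import Mathlib

/-!
Since `φ' ≤ C B eʸ`, the function `y ↦ φ y - C B eʸ` is antitone. Hoeffding's lemma bounds the
cumulant generating function of `X` by `c t² / 2`, so `φ y ≤ (c / 2) eʸ`, which tends to `0` as
`y → -∞`. Hence `φ (log L) - C B L ≤ 0`, and `φ (log L) = L⁻¹ log E[exp (L X)]`.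
-/

open MeasureTheory Real Filter Topology ProbabilityTheory NNReal

theorem le_mul_exp_of_deriv_le_mul_exp {f : ℝ → ℝ} {K A : ℝ} (hf : Differentiable ℝ f)
    (hf' : ∀ y, deriv f y ≤ K * exp y) (hA : ∀ y, f y ≤ A * exp y) (x : ℝ) :
    f x ≤ K * exp x := by
  have hanti : Antitone fun y => f y - K * exp y := by
    refine antitone_of_deriv_nonpos (hf.sub (differentiable_exp.const_mul K)) fun y => ?_
    rw [deriv_fun_sub (hf y) ((differentiable_exp y).const_mul K),
      deriv_const_mul _ (differentiable_exp y), Real.deriv_exp]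
    linarith [hf' y]
  have hlim : Tendsto (fun y => (A - K) * exp y) atBot (𝓝 0) := by
    simpa using tendsto_exp_atBot.const_mul (A - K)
  have : f x - K * exp x ≤ 0 := by
    refine ge_of_tendsto hlim ((eventually_le_atBot x).mono fun y hy => ?_)
    calc f x - K * exp x ≤ f y - K * exp y := hanti hy
      _ ≤ (A - K) * exp y := by linarith [hA y]
  linarith

theorem stmt13_general (Ω : Type) [MeasureSpace Ω] (P : Measure Ω) [IsProbabilityMeasure P]
    (X : Ω → ℝ) (hXm : Measurable X) (M : ℝ) (hXb : ∀ ω, |X ω| ≤ M)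
    (hmean : ∫ ω, X ω ∂P = 0) (C B : ℝ)
    (φ : ℝ → ℝ)
    (hφ : φ = fun y => Real.exp (-y) * Real.log (∫ ω, Real.exp (Real.exp y * X ω) ∂P))
    (hdiff : ∀ y : ℝ, DifferentiableAt ℝ φ y)
    (hderiv : ∀ y : ℝ, deriv φ y ≤ C * Real.exp y * B) :
    ∀ L : ℝ, 0 < L → Real.log (∫ ω, Real.exp (L * X ω) ∂P) ≤ C * L ^ 2 * B := by
  intro L hL
  obtain ⟨c, hX⟩ : ∃ c : ℝ≥0, HasSubgaussianMGF X c P :=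
    ⟨_, hasSubgaussianMGF_of_mem_Icc_of_integral_eq_zero hXm.aemeasurable
      (ae_of_all _ fun ω => abs_le.1 (hXb ω)) hmean⟩
  have hφ_le : ∀ y, φ y ≤ c / 2 * exp y := fun y => by
    calc φ y = exp (-y) * cgf X P (exp y) := by rw [hφ]; rfl
      _ ≤ exp (-y) * (c * exp y ^ 2 / 2) := by gcongr; exact hX.cgf_le _
      _ = c / 2 * exp y := by rw [exp_neg]; field_simp
  have key : φ (log L) ≤ C * B * exp (log L) :=
    le_mul_exp_of_deriv_le_mul_exp hdiff (fun y => (hderiv y).trans_eq (by ring)) hφ_le _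
  simp only [hφ, exp_neg, exp_log hL] at key
  rw [inv_mul_le_iff₀ hL] at key
  linarith

/-- Herbst-type argument: if `φ(y) = e^{-y} log E[exp(e^y X)]` (for a bounded,
mean-zero random variable `X`) satisfies `φ'(y) ≤ C e^y B` for all `y`, then
`log E[exp(L X)] ≤ C L² B` for all `L > 0`. -/
theorem stmt13 (Ω : Type) [MeasureSpace Ω] (P : Measure Ω) [IsProbabilityMeasure P]
    (X : Ω → ℝ) (hXm : Measurable X) (M : ℝ) (hXb : ∀ ω, |X ω| ≤ M)
    (hmean : ∫ ω, X ω ∂P = 0) (C B : ℝ) (hC : 0 < C) (hB : 0 < B)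
    (φ : ℝ → ℝ)
    (hφ : φ = fun y => Real.exp (-y) * Real.log (∫ ω, Real.exp (Real.exp y * X ω) ∂P))
    (hdiff : ∀ y : ℝ, DifferentiableAt ℝ φ y)
    (hderiv : ∀ y : ℝ, deriv φ y ≤ C * Real.exp y * B) :
    ∀ L : ℝ, 0 < L → Real.log (∫ ω, Real.exp (L * X ω) ∂P) ≤ C * L ^ 2 * B :=
  stmt13_general Ω P X hXm M hXb hmean C B φ hφ hdiff hderiv
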